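/- In any semi-quantum nonlocal game G, all separable states yield exactly the same optimal payoff: if σ and σ' are separable bipartite states (possibly on different Hilbert spaces), then ℘*(σ;G) = ℘*(σ';G). -/

import Mathlib

/-!
A separable state is a mixture of product states `γ ⊗ χ`. Against a product state, Alice's
measurement `P` on `A₀A` acts on her question register exactly as the contracted POVM
`Tr_A[P (1 ⊗ γ)]` on `A₀`, and likewise for Bob: the players might as well share no state at
all. Conversely, a strategy that uses no shared state can be run on any state by ignoring it.
By convexity, every payoff achievable with a separable state is thus dominated by one achievable
without a shared state, and all of those are achievable with the separable state; so `℘*` of every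
separable state equals the supremum of the payoffs of strategies without shared state.
-/


open Matrix BigOperators
open scoped Kronecker ComplexOrder

noncomputable section

namespace QNL

/-- A density matrix: positive semidefinite with unit trace. -/
def IsDensity {n : Type*} [Fintype n] (ρ : Matrix n n ℂ) : Prop :=
  ρ.PosSemidef ∧ ρ.trace = 1

/-- A POVM with outcomes in `Fin k`: PSD elements summing to the identity. -/
def IsPOVM {n : Type*} [Fintype n] [DecidableEq n] {k : Type*} [Fintype k]
    (P : k → Matrix n n ℂ) : Prop :=
  (∀ x, (P x).PosSemidef) ∧ ∑ x, P x = 1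

/-- A probability distribution on `Fin k`. -/
def IsProbDist {k : ℕ} (ν : Fin k → ℝ) : Prop :=
  (∀ i, 0 ≤ ν i) ∧ ∑ i, ν i = 1

/-- A completely positive trace-preserving map, via a Kraus representation. -/
def IsCPTP {n m : ℕ}
    (Φ : Matrix (Fin n) (Fin n) ℂ → Matrix (Fin m) (Fin m) ℂ) : Prop :=
  ∃ (r : ℕ) (K : Fin r → Matrix (Fin m) (Fin n) ℂ),
    (∀ X, Φ X = ∑ i, K i * X * (K i)ᴴ) ∧ ∑ i, (K i)ᴴ * K i = 1

/-- The tensor product `E ⊗ F` of two (linear) maps on matrix spaces, given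
entrywise via matrix units. -/
def mapKron {a b a' b' : ℕ}
    (E : Matrix (Fin a) (Fin a) ℂ → Matrix (Fin a') (Fin a') ℂ)
    (F : Matrix (Fin b) (Fin b) ℂ → Matrix (Fin b') (Fin b') ℂ)
    (X : Matrix (Fin a × Fin b) (Fin a × Fin b) ℂ) :
    Matrix (Fin a' × Fin b') (Fin a' × Fin b') ℂ :=
  Matrix.of fun p q => ∑ i : Fin a, ∑ j : Fin a, ∑ k : Fin b, ∑ l : Fin b,
    X (i, k) (j, l) * E (Matrix.single i j 1) p.1 q.1
      * F (Matrix.single k l 1) p.2 q.2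

/-- Local operations and shared randomness: a convex mixture of products of
local CPTP maps. -/
def IsLOSR {a b a' b' : ℕ}
    (Φ : Matrix (Fin a × Fin b) (Fin a × Fin b) ℂ →
      Matrix (Fin a' × Fin b') (Fin a' × Fin b') ℂ) : Prop :=
  ∃ (k : ℕ) (ν : Fin k → ℝ)
    (E : Fin k → Matrix (Fin a) (Fin a) ℂ → Matrix (Fin a') (Fin a') ℂ)
    (F : Fin k → Matrix (Fin b) (Fin b) ℂ → Matrix (Fin b') (Fin b') ℂ),
    IsProbDist ν ∧ (∀ i, IsCPTP (E i)) ∧ (∀ i, IsCPTP (F i)) ∧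
    ∀ X, Φ X = ∑ i, (ν i : ℂ) • mapKron (E i) (F i) X

/-- A separable bipartite state: a finite convex combination of product
density matrices. -/
def IsSeparable {a b : ℕ}
    (σ : Matrix (Fin a × Fin b) (Fin a × Fin b) ℂ) : Prop :=
  ∃ (k : ℕ) (ν : Fin k → ℝ)
    (γ : Fin k → Matrix (Fin a) (Fin a) ℂ)
    (χ : Fin k → Matrix (Fin b) (Fin b) ℂ),
    IsProbDist ν ∧ (∀ i, IsDensity (γ i)) ∧ (∀ i, IsDensity (χ i)) ∧
    σ = ∑ i, (ν i : ℂ) • (γ i ⊗ₖ χ i)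

/-- A semi-quantum nonlocal game. -/
structure SQGame (nS nT nX nY a0 b0 : ℕ) where
  p : Fin nS → ℝ
  q : Fin nT → ℝ
  τ : Fin nS → Matrix (Fin a0) (Fin a0) ℂ
  ω : Fin nT → Matrix (Fin b0) (Fin b0) ℂ
  payoff : Fin nS → Fin nT → Fin nX → Fin nY → ℝ
  hp : IsProbDist p
  hq : IsProbDist q
  hτ : ∀ s, IsDensity (τ s)
  hω : ∀ t, IsDensity (ω t)

/-- The state `τ ⊗ ρ ⊗ ω` on `A₀ ⊗ (A ⊗ B) ⊗ B₀`, written entrywise. -/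
def questionState {a0 a b b0 : ℕ}
    (τ : Matrix (Fin a0) (Fin a0) ℂ)
    (ρ : Matrix (Fin a × Fin b) (Fin a × Fin b) ℂ)
    (ω : Matrix (Fin b0) (Fin b0) ℂ) :
    Matrix (Fin a0 × (Fin a × Fin b) × Fin b0)
      (Fin a0 × (Fin a × Fin b) × Fin b0) ℂ :=
  Matrix.of fun x y => τ x.1 y.1 * ρ x.2.1 y.2.1 * ω x.2.2 y.2.2

/-- The operator `P ⊗ Q` acting on `(A₀A) ⊗ (BB₀)`, arranged on
`A₀ ⊗ (A ⊗ B) ⊗ B₀`, written entrywise. -/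
def localOp {a0 a b b0 : ℕ}
    (P : Matrix (Fin a0 × Fin a) (Fin a0 × Fin a) ℂ)
    (Q : Matrix (Fin b × Fin b0) (Fin b × Fin b0) ℂ) :
    Matrix (Fin a0 × (Fin a × Fin b) × Fin b0)
      (Fin a0 × (Fin a × Fin b) × Fin b0) ℂ :=
  Matrix.of fun x y =>
    P (x.1, x.2.1.1) (y.1, y.2.1.1) * Q (x.2.1.2, x.2.2) (y.2.1.2, y.2.2)

/-- The expected payoff of a state `ρ` in the game `G` with local
measurement strategies `P`, `Q`. -/
def expPayoff {nS nT nX nY a0 b0 a b : ℕ} (G : SQGame nS nT nX nY a0 b0)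
    (ρ : Matrix (Fin a × Fin b) (Fin a × Fin b) ℂ)
    (P : Fin nX → Matrix (Fin a0 × Fin a) (Fin a0 × Fin a) ℂ)
    (Q : Fin nY → Matrix (Fin b × Fin b0) (Fin b × Fin b0) ℂ) : ℝ :=
  ∑ s, ∑ t, ∑ x, ∑ y, G.p s * G.q t * G.payoff s t x y *
    ((localOp (P x) (Q y) * questionState (G.τ s) ρ (G.ω t)).trace).re

/-- The optimal expected payoff `℘*(ρ; G)`. -/
def optPayoff {nS nT nX nY a0 b0 a b : ℕ}
    (G : SQGame nS nT nX nY a0 b0)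
    (ρ : Matrix (Fin a × Fin b) (Fin a × Fin b) ℂ) : ℝ :=
  sSup { r | ∃ (P : Fin nX → Matrix (Fin a0 × Fin a) (Fin a0 × Fin a) ℂ)
      (Q : Fin nY → Matrix (Fin b × Fin b0) (Fin b × Fin b0) ℂ),
      IsPOVM P ∧ IsPOVM Q ∧ r = expPayoff G ρ P Q }

/-- Membership in the convex hull of product POVMs `Co{M(A₀A;X) ⊗ M(BB₀;Y)}`. -/
def InCoHull {nX nY a0 b0 a b : ℕ}
    (Z : Fin nX → Fin nY →
      Matrix (Fin a0 × (Fin a × Fin b) × Fin b0)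
        (Fin a0 × (Fin a × Fin b) × Fin b0) ℂ) : Prop :=
  ∃ (k : ℕ) (ν : Fin k → ℝ)
    (P : Fin k → Fin nX → Matrix (Fin a0 × Fin a) (Fin a0 × Fin a) ℂ)
    (Q : Fin k → Fin nY → Matrix (Fin b × Fin b0) (Fin b × Fin b0) ℂ),
    IsProbDist ν ∧ (∀ i, IsPOVM (P i)) ∧ (∀ i, IsPOVM (Q i)) ∧
    ∀ x y, Z x y = ∑ i, (ν i : ℂ) • localOp (P i x) (Q i y)

/-- The set of question-answer probability distributions achievable with the
state `ρ` and (subnormalized) question ensembles `τ`, `ω`. -/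
def distSet {nS nT nX nY a0 b0 a b : ℕ}
    (ρ : Matrix (Fin a × Fin b) (Fin a × Fin b) ℂ)
    (τ : Fin nS → Matrix (Fin a0) (Fin a0) ℂ)
    (ω : Fin nT → Matrix (Fin b0) (Fin b0) ℂ) :
    Set (Fin nS × Fin nT × Fin nX × Fin nY → ℝ) :=
  { μ | ∃ Z, InCoHull Z ∧ ∀ s t x y,
      μ (s, t, x, y) = ((Z x y * questionState (τ s) ρ (ω t)).trace).re }


lemma trace_submatrix_equiv {m n R : Type*} [Fintype m] [Fintype n] [AddCommMonoid R]
    (A : Matrix n n R) (e : m ≃ n) : (A.submatrix e e).trace = A.trace :=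
  e.sum_comp fun i => A i i

lemma sum_kronecker {ι R l m n o : Type*} [Fintype ι] [NonUnitalNonAssocSemiring R]
    (A : ι → Matrix m l R) (B : Matrix n o R) : ∑ x, (A x ⊗ₖ B) = (∑ x, A x) ⊗ₖ B := by
  ext i j
  simp [Matrix.sum_apply, Finset.sum_mul]

lemma kronecker_sum {ι R l m n o : Type*} [Fintype ι] [NonUnitalNonAssocSemiring R]
    (A : Matrix m l R) (B : ι → Matrix n o R) : ∑ x, (A ⊗ₖ B x) = A ⊗ₖ ∑ x, B x := by
  ext i j
  simp [Matrix.sum_apply, Finset.mul_sum]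

lemma IsProbDist.exists_sum_mul_le {k : ℕ} {ν : Fin k → ℝ} (hν : IsProbDist ν)
    (f : Fin k → ℝ) : ∃ i, ∑ j, ν j * f j ≤ f i := by
  have hk : (Finset.univ : Finset (Fin k)).Nonempty := by
    rw [Finset.univ_nonempty_iff]
    by_contra h
    simpa [not_nonempty_iff.mp h] using hν.2
  obtain ⟨i, -, hi⟩ := Finset.exists_max_image Finset.univ f hk
  refine ⟨i, ?_⟩
  calc ∑ j, ν j * f j ≤ ∑ j, ν j * f i :=
        Finset.sum_le_sum fun j _ => mul_le_mul_of_nonneg_left (hi j (Finset.mem_univ j)) (hν.1 j)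
    _ = f i := by rw [← Finset.sum_mul, hν.2, one_mul]

section Reduction

variable {m n : Type*} [Fintype n]

/-- The partial trace `Tr_n[P (1 ⊗ γ)]`: measuring `P` on `m ⊗ n` with `n` prepared in `γ`
amounts to measuring `reduceRight P γ` on `m`. -/
def reduceRight (P : Matrix (m × n) (m × n) ℂ) (γ : Matrix n n ℂ) : Matrix m m ℂ :=
  of fun u v => ∑ p, ∑ p', P (u, p) (v, p') * γ p' p

lemma trace_reduceRight_mul [Fintype m] (P : Matrix (m × n) (m × n) ℂ) (γ : Matrix n n ℂ)
    (τ : Matrix m m ℂ) : (reduceRight P γ * τ).trace = (P * (τ ⊗ₖ γ)).trace := by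
  simp only [trace, diag, mul_apply, reduceRight, of_apply, kroneckerMap_apply,
    Fintype.sum_prod_type, Finset.sum_mul]
  refine Finset.sum_congr rfl fun u _ => ?_
  rw [Finset.sum_comm]
  refine Finset.sum_congr rfl fun p _ => Finset.sum_congr rfl fun v _ =>
    Finset.sum_congr rfl fun p' _ => by ring

lemma sum_reduceRight {ι : Type*} [Fintype ι] (P : ι → Matrix (m × n) (m × n) ℂ)
    (γ : Matrix n n ℂ) : ∑ x, reduceRight (P x) γ = reduceRight (∑ x, P x) γ := by
  ext u v
  simp only [Matrix.sum_apply, reduceRight, of_apply, Finset.sum_mul]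
  rw [Finset.sum_comm]
  exact Finset.sum_congr rfl fun p _ => Finset.sum_comm

lemma reduceRight_one [DecidableEq m] [DecidableEq n] (γ : Matrix n n ℂ) :
    reduceRight (1 : Matrix (m × n) (m × n) ℂ) γ = γ.trace • 1 := by
  ext u v
  by_cases h : u = v
  · subst h
    simp [reduceRight, one_apply, trace]
  · simp [reduceRight, one_apply, h]

open scoped MatrixOrder in
lemma posSemidef_reduceRight [Fintype m] [DecidableEq m] [DecidableEq n]
    {P : Matrix (m × n) (m × n) ℂ} {γ : Matrix n n ℂ} (hP : P.PosSemidef) (hγ : γ.PosSemidef) :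
    (reduceRight P γ).PosSemidef := by
  obtain ⟨B, rfl⟩ := CStarAlgebra.nonneg_iff_eq_star_mul_self.mp hγ.nonneg
  -- `Kᵢ = 1 ⊗ (row i of B)ᴴ`, so that `Tr_n[P (1 ⊗ BᴴB)] = ∑ᵢ Kᵢᴴ P Kᵢ`.
  let K : n → Matrix (m × n) m ℂ := fun i => of fun w v => if w.1 = v then star (B i w.2) else 0
  have hK : reduceRight P (star B * B) = ∑ i, (K i)ᴴ * P * K i := by
    ext u v
    simp only [reduceRight, star_eq_conjTranspose, mul_apply, conjTranspose_apply, RCLike.star_def,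
      Finset.mul_sum, of_apply, Matrix.sum_apply, apply_ite, RingHomCompTriple.comp_apply,
      RingHom.id_apply, star_zero, ite_mul, zero_mul, Fintype.sum_prod_type, Finset.sum_ite_irrel,
      Finset.sum_const_zero, Finset.sum_ite_eq', Finset.mem_univ, ↓reduceIte, Finset.sum_mul,
      mul_zero, K]
    rw [Finset.sum_comm]
    conv_rhs => rw [Finset.sum_comm]
    refine Finset.sum_congr rfl fun p' _ => ?_
    rw [Finset.sum_comm]
    exact Finset.sum_congr rfl fun i _ => Finset.sum_congr rfl fun p _ => by ring
  rw [hK]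
  exact posSemidef_sum _ fun i _ => hP.conjTranspose_mul_mul_same (K i)

def reduceLeft (Q : Matrix (n × m) (n × m) ℂ) (χ : Matrix n n ℂ) : Matrix m m ℂ :=
  reduceRight (Q.submatrix (Equiv.prodComm m n) (Equiv.prodComm m n)) χ

lemma trace_reduceLeft_mul [Fintype m] (Q : Matrix (n × m) (n × m) ℂ) (χ : Matrix n n ℂ)
    (ω : Matrix m m ℂ) : (reduceLeft Q χ * ω).trace = (Q * (χ ⊗ₖ ω)).trace := by
  have hswap : ω ⊗ₖ χ = (χ ⊗ₖ ω).submatrix (Equiv.prodComm m n) (Equiv.prodComm m n) := by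
    ext i j
    simp [mul_comm]
  rw [reduceLeft, trace_reduceRight_mul, hswap, submatrix_mul_equiv, trace_submatrix_equiv]

end Reduction

section POVM

variable {ι m n : Type*} [Fintype ι] [Fintype m] [Fintype n] [DecidableEq m] [DecidableEq n]

lemma IsPOVM.kronecker_one {P : ι → Matrix m m ℂ} (hP : IsPOVM P) :
    IsPOVM fun x => P x ⊗ₖ (1 : Matrix n n ℂ) :=
  ⟨fun x => (hP.1 x).kronecker PosSemidef.one, by rw [sum_kronecker, hP.2, one_kronecker_one]⟩

lemma IsPOVM.one_kronecker {Q : ι → Matrix n n ℂ} (hQ : IsPOVM Q) :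
    IsPOVM fun y => (1 : Matrix m m ℂ) ⊗ₖ Q y :=
  ⟨fun y => PosSemidef.one.kronecker (hQ.1 y), by rw [kronecker_sum, hQ.2, one_kronecker_one]⟩

lemma IsPOVM.submatrix {P : ι → Matrix n n ℂ} (hP : IsPOVM P) (e : m ≃ n) :
    IsPOVM fun x => (P x).submatrix e e := by
  refine ⟨fun x => (hP.1 x).submatrix e, ?_⟩
  ext i j
  simpa [Matrix.sum_apply, one_apply, e.injective.eq_iff] using congrFun₂ hP.2 (e i) (e j)

lemma IsPOVM.reduceRight {P : ι → Matrix (m × n) (m × n) ℂ} (hP : IsPOVM P)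
    {γ : Matrix n n ℂ} (hγ : IsDensity γ) : IsPOVM fun x => reduceRight (P x) γ :=
  ⟨fun x => posSemidef_reduceRight (hP.1 x) hγ.1,
    by rw [sum_reduceRight, hP.2, reduceRight_one, hγ.2, one_smul]⟩

lemma IsPOVM.reduceLeft {Q : ι → Matrix (n × m) (n × m) ℂ} (hQ : IsPOVM Q)
    {χ : Matrix n n ℂ} (hχ : IsDensity χ) : IsPOVM fun y => reduceLeft (Q y) χ :=
  (hQ.submatrix _).reduceRight hχ

end POVM

section Game

variable {nS nT nX nY a0 b0 a b : ℕ}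

def regroup (a0 a b b0 : ℕ) :
    Fin a0 × (Fin a × Fin b) × Fin b0 ≃ (Fin a0 × Fin a) × (Fin b × Fin b0) where
  toFun x := ((x.1, x.2.1.1), (x.2.1.2, x.2.2))
  invFun y := (y.1.1, (y.1.2, y.2.1), y.2.2)

lemma localOp_eq_submatrix (P : Matrix (Fin a0 × Fin a) (Fin a0 × Fin a) ℂ)
    (Q : Matrix (Fin b × Fin b0) (Fin b × Fin b0) ℂ) :
    localOp P Q = (P ⊗ₖ Q).submatrix (regroup a0 a b b0) (regroup a0 a b b0) :=
  rfl

lemma questionState_eq_kronecker (τ : Matrix (Fin a0) (Fin a0) ℂ)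
    (ρ : Matrix (Fin a × Fin b) (Fin a × Fin b) ℂ) (ω : Matrix (Fin b0) (Fin b0) ℂ) :
    questionState τ ρ ω = τ ⊗ₖ (ρ ⊗ₖ ω) := by
  ext x y
  simp [questionState, mul_assoc]

lemma questionState_kronecker_eq_submatrix (τ : Matrix (Fin a0) (Fin a0) ℂ)
    (γ : Matrix (Fin a) (Fin a) ℂ) (χ : Matrix (Fin b) (Fin b) ℂ)
    (ω : Matrix (Fin b0) (Fin b0) ℂ) :
    questionState τ (γ ⊗ₖ χ) ω
      = ((τ ⊗ₖ γ) ⊗ₖ (χ ⊗ₖ ω)).submatrix (regroup a0 a b b0) (regroup a0 a b b0) := by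
  ext x y
  simp only [questionState, kroneckerMap_apply, of_apply, regroup, Equiv.coe_fn_mk, submatrix_apply]
  ring

lemma trace_localOp_mul_questionState_kronecker
    (P : Matrix (Fin a0 × Fin a) (Fin a0 × Fin a) ℂ)
    (Q : Matrix (Fin b × Fin b0) (Fin b × Fin b0) ℂ) (τ : Matrix (Fin a0) (Fin a0) ℂ)
    (γ : Matrix (Fin a) (Fin a) ℂ) (χ : Matrix (Fin b) (Fin b) ℂ)
    (ω : Matrix (Fin b0) (Fin b0) ℂ) :
    (localOp P Q * questionState τ (γ ⊗ₖ χ) ω).trace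
      = (P * (τ ⊗ₖ γ)).trace * (Q * (χ ⊗ₖ ω)).trace := by
  rw [localOp_eq_submatrix, questionState_kronecker_eq_submatrix, submatrix_mul_equiv,
    trace_submatrix_equiv, ← mul_kronecker_mul, trace_kronecker]

lemma localOp_kronecker_one (P₀ : Matrix (Fin a0) (Fin a0) ℂ) (Q₀ : Matrix (Fin b0) (Fin b0) ℂ) :
    localOp (P₀ ⊗ₖ (1 : Matrix (Fin a) (Fin a) ℂ)) ((1 : Matrix (Fin b) (Fin b) ℂ) ⊗ₖ Q₀)
      = P₀ ⊗ₖ (1 ⊗ₖ Q₀) := by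
  ext x y
  simp only [localOp, kroneckerMap_apply, of_apply, one_apply, Prod.ext_iff]
  split_ifs <;> simp_all

lemma trace_localOp_kronecker_one_mul_questionState (P₀ : Matrix (Fin a0) (Fin a0) ℂ)
    (Q₀ : Matrix (Fin b0) (Fin b0) ℂ) (τ : Matrix (Fin a0) (Fin a0) ℂ)
    (ρ : Matrix (Fin a × Fin b) (Fin a × Fin b) ℂ) (ω : Matrix (Fin b0) (Fin b0) ℂ) :
    (localOp (P₀ ⊗ₖ 1) (1 ⊗ₖ Q₀) * questionState τ ρ ω).trace
      = (P₀ * τ).trace * (Q₀ * ω).trace * ρ.trace := by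
  rw [localOp_kronecker_one, questionState_eq_kronecker, ← mul_kronecker_mul,
    ← mul_kronecker_mul, trace_kronecker, trace_kronecker, Matrix.one_mul]
  ring

lemma questionState_sum_smul {k : ℕ} (τ : Matrix (Fin a0) (Fin a0) ℂ)
    (ν : Fin k → ℝ) (ρ : Fin k → Matrix (Fin a × Fin b) (Fin a × Fin b) ℂ)
    (ω : Matrix (Fin b0) (Fin b0) ℂ) :
    questionState τ (∑ i, (ν i : ℂ) • ρ i) ω = ∑ i, (ν i : ℂ) • questionState τ (ρ i) ω := by
  simp only [questionState_eq_kronecker, ← sum_kronecker, ← kronecker_sum, smul_kronecker,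
    kronecker_smul]

variable (G : SQGame nS nT nX nY a0 b0)

lemma expPayoff_sum_smul {k : ℕ} (ν : Fin k → ℝ)
    (ρ : Fin k → Matrix (Fin a × Fin b) (Fin a × Fin b) ℂ)
    (P : Fin nX → Matrix (Fin a0 × Fin a) (Fin a0 × Fin a) ℂ)
    (Q : Fin nY → Matrix (Fin b × Fin b0) (Fin b × Fin b0) ℂ) :
    expPayoff G (∑ i, (ν i : ℂ) • ρ i) P Q = ∑ i, ν i * expPayoff G (ρ i) P Q := by
  simp only [expPayoff, questionState_sum_smul, Matrix.mul_smul, trace_sum, trace_smul,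
    Complex.re_sum, smul_eq_mul, Complex.re_ofReal_mul, Finset.mul_sum]
  simp only [Finset.sum_comm (s := (Finset.univ : Finset (Fin k))), mul_left_comm (ν _)]

end Game

section Payoff

variable {nS nT nX nY a0 b0 a b : ℕ} (G : SQGame nS nT nX nY a0 b0)

/-- The payoff of measuring `P₀` on `A₀` and `Q₀` on `B₀`, without any shared state. -/
def unassistedPayoff (P₀ : Fin nX → Matrix (Fin a0) (Fin a0) ℂ)
    (Q₀ : Fin nY → Matrix (Fin b0) (Fin b0) ℂ) : ℝ :=
  ∑ s, ∑ t, ∑ x, ∑ y, G.p s * G.q t * G.payoff s t x y *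
    ((P₀ x * G.τ s).trace * (Q₀ y * G.ω t).trace).re

def unassistedPayoffSet : Set ℝ :=
  { r | ∃ (P₀ : Fin nX → Matrix (Fin a0) (Fin a0) ℂ) (Q₀ : Fin nY → Matrix (Fin b0) (Fin b0) ℂ),
      IsPOVM P₀ ∧ IsPOVM Q₀ ∧ r = unassistedPayoff G P₀ Q₀ }

def payoffSet (ρ : Matrix (Fin a × Fin b) (Fin a × Fin b) ℂ) : Set ℝ :=
  { r | ∃ (P : Fin nX → Matrix (Fin a0 × Fin a) (Fin a0 × Fin a) ℂ)
      (Q : Fin nY → Matrix (Fin b × Fin b0) (Fin b × Fin b0) ℂ),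
      IsPOVM P ∧ IsPOVM Q ∧ r = expPayoff G ρ P Q }

lemma expPayoff_kronecker (γ : Matrix (Fin a) (Fin a) ℂ) (χ : Matrix (Fin b) (Fin b) ℂ)
    (P : Fin nX → Matrix (Fin a0 × Fin a) (Fin a0 × Fin a) ℂ)
    (Q : Fin nY → Matrix (Fin b × Fin b0) (Fin b × Fin b0) ℂ) :
    expPayoff G (γ ⊗ₖ χ) P Q
      = unassistedPayoff G (fun x => reduceRight (P x) γ) (fun y => reduceLeft (Q y) χ) := by
  simp only [expPayoff, unassistedPayoff, trace_localOp_mul_questionState_kronecker,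
    trace_reduceRight_mul, trace_reduceLeft_mul]

lemma expPayoff_kronecker_one {ρ : Matrix (Fin a × Fin b) (Fin a × Fin b) ℂ}
    (hρ : ρ.trace = 1) (P₀ : Fin nX → Matrix (Fin a0) (Fin a0) ℂ)
    (Q₀ : Fin nY → Matrix (Fin b0) (Fin b0) ℂ) :
    expPayoff G ρ (fun x => P₀ x ⊗ₖ 1) (fun y => 1 ⊗ₖ Q₀ y) = unassistedPayoff G P₀ Q₀ := by
  simp only [expPayoff, unassistedPayoff, trace_localOp_kronecker_one_mul_questionState, hρ,
    mul_one]

lemma unassistedPayoffSet_subset_payoffSet {ρ : Matrix (Fin a × Fin b) (Fin a × Fin b) ℂ}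
    (hρ : ρ.trace = 1) : unassistedPayoffSet G ⊆ payoffSet G ρ := by
  rintro r ⟨P₀, Q₀, hP₀, hQ₀, rfl⟩
  exact ⟨_, _, hP₀.kronecker_one, hQ₀.one_kronecker, (expPayoff_kronecker_one G hρ P₀ Q₀).symm⟩

lemma IsSeparable.trace_eq_one {σ : Matrix (Fin a × Fin b) (Fin a × Fin b) ℂ}
    (hσ : IsSeparable σ) : σ.trace = 1 := by
  obtain ⟨k, ν, γ, χ, hν, hγ, hχ, rfl⟩ := hσ
  simp only [trace_sum, trace_smul, trace_kronecker, (hγ _).2, (hχ _).2, mul_one, smul_eq_mul]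
  exact_mod_cast hν.2

lemma exists_unassistedPayoff_ge {σ : Matrix (Fin a × Fin b) (Fin a × Fin b) ℂ}
    (hσ : IsSeparable σ) {r : ℝ} (hr : r ∈ payoffSet G σ) :
    ∃ u ∈ unassistedPayoffSet G, r ≤ u := by
  obtain ⟨k, ν, γ, χ, hν, hγ, hχ, rfl⟩ := hσ
  obtain ⟨P, Q, hP, hQ, rfl⟩ := hr
  obtain ⟨i, hi⟩ := hν.exists_sum_mul_le fun i => expPayoff G (γ i ⊗ₖ χ i) P Q
  refine ⟨_, ⟨_, _, hP.reduceRight (hγ i), hQ.reduceLeft (hχ i), rfl⟩, ?_⟩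
  rwa [expPayoff_sum_smul, ← expPayoff_kronecker]

lemma optPayoff_eq_sSup_unassistedPayoffSet {σ : Matrix (Fin a × Fin b) (Fin a × Fin b) ℂ}
    (hσ : IsSeparable σ) : optPayoff G σ = sSup (unassistedPayoffSet G) :=
  csSup_eq_csSup_of_forall_exists_le (fun _ hr => exists_unassistedPayoff_ge G hσ hr)
    fun u hu => ⟨u, unassistedPayoffSet_subset_payoffSet G hσ.trace_eq_one hu, le_rfl⟩

end Payoff

theorem separable_states_same_payoff_general {nS nT nX nY a0 b0 a b a' b' : ℕ}
    (G : SQGame nS nT nX nY a0 b0)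
    (σ : Matrix (Fin a × Fin b) (Fin a × Fin b) ℂ)
    (σ' : Matrix (Fin a' × Fin b') (Fin a' × Fin b') ℂ)
    (hσ : IsSeparable σ) (hσ' : IsSeparable σ') :
    optPayoff G σ = optPayoff G σ' :=
  (optPayoff_eq_sSup_unassistedPayoffSet G hσ).trans
    (optPayoff_eq_sSup_unassistedPayoffSet G hσ').symm

/-- in any semi-quantum nonlocal game, all separable states
yield exactly the same optimal payoff. -/
theorem separable_states_same_payoff {nS nT nX nY a0 b0 a b a' b' : ℕ}
    (G : SQGame nS nT nX nY a0 b0)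
    (σ : Matrix (Fin a × Fin b) (Fin a × Fin b) ℂ)
    (σ' : Matrix (Fin a' × Fin b') (Fin a' × Fin b') ℂ)
    (hσd : IsDensity σ) (hσ'd : IsDensity σ')
    (hσ : IsSeparable σ) (hσ' : IsSeparable σ') :
    optPayoff G σ = optPayoff G σ' :=
  separable_states_same_payoff_general G σ σ' hσ hσ'

end QNL
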